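/- arXiv:1402.3963 — 3 statements merged into one kernel-verified Lean document; each statement's English description precedes it below -/
import Mathlib

section
/- Let U be a connected open subset of ℂⁿ, let f : U → ℂ be holomorphic, and suppose (gᵢ : Uᵢ → ℂ)_{i ∈ ℕ} is a countable family of holomorphic functions on connected open subsets Uᵢ ⊆ U such that for every a ∈ U there is i with a ∈ Uᵢ and gᵢ(a) = f(a). Let U′ be the union of those Uᵢ on which gᵢ agrees with f identically. Then U ∖ U′ has Lebesgue measure zero; moreover if n = 1 then U ∖ U′ is countable. -/
/-!
Where `gᵢ` does not agree with `f` on the connected open set `Uᵢ`, their coincidence set is the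
zero set of the holomorphic function `gᵢ - f ≢ 0`, and countably many of these cover `U ∖ U'`.

Such a zero set `Z` is null. Near any of its points pick `c` with `h c ≠ 0` and a ball `B ∋ c` of
holomorphy. On each complex line through `c`, `h` is a one-variable holomorphic function that is
nonzero at `c`, so its zeros in `B` are countable. By Fubini `{(t, v) : c + t v ∈ Z ∩ B}` is null,
so for some real `t ≠ 0` the slice `{v : c + t v ∈ Z ∩ B}`, a rescaled translate of `Z ∩ B`, is
null. The several-variable identity theorem needed to find `c` is likewise reduced to one variable,
along segments in balls. In dimension one the zeros are isolated, hence countable.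
-/

open MeasureTheory Set Metric Filter Topology

theorem AnalyticOnNhd.countable_setOf_eq_zero_inter {𝕜 F : Type*} [NontriviallyNormedField 𝕜]
    [SecondCountableTopology 𝕜] [NormedAddCommGroup F] [NormedSpace 𝕜 F] {f : 𝕜 → F}
    {U : Set 𝕜} (hf : AnalyticOnNhd 𝕜 f U) (hU : IsPreconnected U) (hne : ¬EqOn f 0 U) :
    ({z | f z = 0} ∩ U).Countable :=
  (HereditarilyLindelofSpace.isLindelof _).countable_of_isDiscrete <|
    isDiscrete_of_codiscreteWithin <|
      (hf.eqOn_zero_or_eventually_ne_zero_of_preconnected hU).resolve_left hne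

theorem MeasureTheory.Measure.addHaar_eq_zero_of_forall_volume_line_eq_zero {E : Type*}
    [NormedAddCommGroup E] [NormedSpace ℝ E] [FiniteDimensional ℝ E] [MeasurableSpace E]
    [BorelSpace E] (μ : Measure E) [μ.IsAddHaarMeasure] {Z : Set E} (hZ : MeasurableSet Z) (c : E)
    (hline : ∀ v, volume {t : ℝ | c + t • v ∈ Z} = 0) : μ Z = 0 := by
  set S : Set (ℝ × E) := {p | c + p.1 • p.2 ∈ Z}
  have hS : MeasurableSet S := hZ.preimage (by fun_prop)
  have hSnull : (volume.prod μ) S = 0 := by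
    rw [Measure.prod_apply_symm hS]
    exact (lintegral_congr hline).trans lintegral_zero
  obtain ⟨t, ht0, ht⟩ : ∃ t : ℝ, t ≠ 0 ∧ μ {v | c + t • v ∈ Z} = 0 :=
    ((Measure.measure_ae_null_of_prod_null hSnull).and (Measure.ae_ne volume 0)).exists.imp
      fun t ht => ⟨ht.2, ht.1⟩
  have hscale :
      μ {v | c + t • v ∈ Z} = ENNReal.ofReal |(t ^ Module.finrank ℝ E)⁻¹| * μ Z := by
    rw [show {v | c + t • v ∈ Z} = (t • ·) ⁻¹' ((c + ·) ⁻¹' Z) from rfl,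
      Measure.addHaar_preimage_smul μ ht0, measure_preimage_add]
  simpa [hscale, ht0] using ht

theorem IsOpen.measurableSet_setOf_eq_zero_inter {X Y : Type*} [TopologicalSpace X]
    [MeasurableSpace X] [OpensMeasurableSpace X] [TopologicalSpace Y] [Zero Y] [T1Space Y]
    {h : X → Y} {V : Set X} (hV : IsOpen V) (hh : ContinuousOn h V) :
    MeasurableSet ({x | h x = 0} ∩ V) := by
  have : {x | h x = 0} ∩ V = V \ (V ∩ h ⁻¹' {0}ᶜ) := by
    ext x
    by_cases hx : x ∈ V <;> simp [hx]
  rw [this]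
  exact hV.measurableSet.diff (hh.isOpen_inter_preimage hV isOpen_compl_singleton).measurableSet

section ComplexLine

variable {E : Type*} [NormedAddCommGroup E] [NormedSpace ℂ E] {h : E → ℂ} {V : Set E}

theorem IsOpen.setOf_add_smul_mem (hV : IsOpen V) (c v : E) :
    IsOpen {t : ℂ | c + t • v ∈ V} :=
  hV.preimage (by fun_prop)

theorem Convex.isPreconnected_setOf_add_smul_mem (hV : Convex ℝ V) (c v : E) :
    IsPreconnected {t : ℂ | c + t • v ∈ V} :=
  ((hV.translate_preimage_right c).linear_preimage
    ((LinearMap.toSpanSingleton ℂ E v).restrictScalars ℝ)).isPreconnected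

theorem DifferentiableOn.analyticOnNhd_comp_add_smul (hh : DifferentiableOn ℂ h V)
    (hV : IsOpen V) (c v : E) :
    AnalyticOnNhd ℂ (fun t : ℂ => h (c + t • v)) {t | c + t • v ∈ V} :=
  (hh.comp (f := fun t : ℂ => c + t • v) (by fun_prop) fun _ ht => ht).analyticOnNhd
    (hV.setOf_add_smul_mem c v)

theorem DifferentiableOn.eqOn_zero_of_convex_of_eventuallyEq_zero
    (hh : DifferentiableOn ℂ h V) (hV : IsOpen V) (hVc : Convex ℝ V) {y : E} (hy : y ∈ V)
    (hy0 : h =ᶠ[𝓝 y] 0) : EqOn h 0 V := by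
  intro z hz
  have hsegment : (fun t : ℂ => h (y + t • (z - y))) =ᶠ[𝓝 0] 0 :=
    (Continuous.tendsto' (by fun_prop) 0 y (by simp)).eventually hy0
  have hline :=
    (hh.analyticOnNhd_comp_add_smul hV y (z - y)).eqOn_zero_of_preconnected_of_eventuallyEq_zero
      (hVc.isPreconnected_setOf_add_smul_mem y (z - y)) (by simpa using hy) hsegment
  simpa using hline (show (1 : ℂ) ∈ _ by simpa using hz)

theorem DifferentiableOn.eqOn_zero_of_preconnected_of_eventuallyEq_zero
    (hh : DifferentiableOn ℂ h V) (hV : IsOpen V) (hVc : IsPreconnected V) {y : E} (hy : y ∈ V)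
    (hy0 : h =ᶠ[𝓝 y] 0) : EqOn h 0 V := by
  have hN : V ⊆ {x | h =ᶠ[𝓝 x] 0} := by
    refine hVc.subset_of_closure_inter_subset isOpen_setOfPred_eventually_nhds ⟨y, hy, hy0⟩ ?_
    rintro x ⟨hxN, hxV⟩
    obtain ⟨r, hr, hrV⟩ := Metric.isOpen_iff.mp hV x hxV
    obtain ⟨y', hy'r, hy'N⟩ := mem_closure_iff.mp hxN (ball x r) isOpen_ball (mem_ball_self hr)
    exact eventually_of_mem (ball_mem_nhds x hr) <|
      (hh.mono hrV).eqOn_zero_of_convex_of_eventuallyEq_zero isOpen_ball (convex_ball x r)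
        hy'r hy'N
  exact fun x hx => (hN hx).self_of_nhds

theorem DifferentiableOn.frequently_ne_zero (hh : DifferentiableOn ℂ h V) (hV : IsOpen V)
    (hVc : IsPreconnected V) (hne : ¬EqOn h 0 V) {x : E} (hx : x ∈ V) :
    ∃ᶠ y in 𝓝 x, h y ≠ 0 := fun hev =>
  hne <| hh.eqOn_zero_of_preconnected_of_eventuallyEq_zero hV hVc hx <| by
    simpa [EventuallyEq] using hev

theorem DifferentiableOn.countable_setOf_add_smul_eq_zero (hh : DifferentiableOn ℂ h V)
    (hV : IsOpen V) (hVc : Convex ℝ V) {c : E} (hc : c ∈ V) (hc0 : h c ≠ 0) (v : E) :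
    ({t : ℂ | h (c + t • v) = 0} ∩ {t | c + t • v ∈ V}).Countable :=
  (hh.analyticOnNhd_comp_add_smul hV c v).countable_setOf_eq_zero_inter
    (hVc.isPreconnected_setOf_add_smul_mem c v) fun H =>
      hc0 (by simpa using H (show (0 : ℂ) ∈ _ by simpa using hc))

variable [FiniteDimensional ℂ E]

theorem DifferentiableOn.countable_setOf_eq_zero_inter (hE : Module.finrank ℂ E = 1)
    (hh : DifferentiableOn ℂ h V) (hV : IsOpen V) (hVc : IsPreconnected V) (hne : ¬EqOn h 0 V) :
    ({x | h x = 0} ∩ V).Countable := by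
  let e : ℂ ≃L[ℂ] E := ContinuousLinearEquiv.ofFinrankEq (by simp [hE])
  have hφ : AnalyticOnNhd ℂ (h ∘ e) (e ⁻¹' V) :=
    (hh.comp e.differentiableOn (mapsTo_preimage _ _)).analyticOnNhd (hV.preimage e.continuous)
  have hne' : ¬EqOn (h ∘ e) 0 (e ⁻¹' V) := fun H =>
    hne fun x hx => by simpa using H (show e.symm x ∈ e ⁻¹' V by simpa using hx)
  have hcount := (hφ.countable_setOf_eq_zero_inter
    (e.toHomeomorph.isPreconnected_preimage.mpr hVc) hne').preimage e.symm.injective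
  convert hcount using 1
  ext x
  simp

variable [MeasurableSpace E] [BorelSpace E]

theorem DifferentiableOn.addHaar_setOf_eq_zero_inter_of_convex (μ : Measure E)
    [μ.IsAddHaarMeasure] (hh : DifferentiableOn ℂ h V) (hV : IsOpen V) (hVc : Convex ℝ V) {c : E}
    (hc : c ∈ V) (hc0 : h c ≠ 0) : μ ({x | h x = 0} ∩ V) = 0 := by
  refine Measure.addHaar_eq_zero_of_forall_volume_line_eq_zero μ
    (hV.measurableSet_setOf_eq_zero_inter hh.continuousOn) c fun v => ?_
  have hcount := (hh.countable_setOf_add_smul_eq_zero hV hVc hc hc0 v).preimage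
    Complex.ofReal_injective
  refine measure_mono_null (fun t ht => ?_) (hcount.measure_zero volume)
  simpa [Complex.coe_smul] using ht

theorem DifferentiableOn.addHaar_setOf_eq_zero_inter (μ : Measure E) [μ.IsAddHaarMeasure]
    (hh : DifferentiableOn ℂ h V) (hV : IsOpen V) (hVc : IsPreconnected V) (hne : ¬EqOn h 0 V) :
    μ ({x | h x = 0} ∩ V) = 0 := by
  refine measure_null_of_locally_null _ fun a ha => ?_
  obtain ⟨r, hr, hrV⟩ := Metric.isOpen_iff.mp hV a ha.2
  obtain ⟨c, hc0, hca⟩ :=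
    ((hh.frequently_ne_zero hV hVc hne ha.2).and_eventually
      (ball_mem_nhds a (half_pos hr))).exists
  have hB : ball c (r / 2) ⊆ V :=
    (ball_subset_ball' (by linarith [mem_ball.mp hca])).trans hrV
  refine ⟨_, inter_mem_nhdsWithin _ (isOpen_ball.mem_nhds (mem_ball_comm.mp hca)), ?_⟩
  refine measure_mono_null (inter_subset_inter_left _ inter_subset_left) ?_
  exact (hh.mono hB).addHaar_setOf_eq_zero_inter_of_convex μ isOpen_ball (convex_ball c _)
    (mem_ball_self (half_pos hr)) hc0

end ComplexLine

theorem measure_zero_of_pointwise_definable_general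
    {n : ℕ} (U : Set (Fin n → ℂ))
    (f : (Fin n → ℂ) → ℂ) (hf : DifferentiableOn ℂ f U)
    (Ui : ℕ → Set (Fin n → ℂ)) (g : ℕ → ((Fin n → ℂ) → ℂ))
    (hUi_open : ∀ i, IsOpen (Ui i)) (hUi_conn : ∀ i, IsConnected (Ui i))
    (hUi_sub : ∀ i, Ui i ⊆ U)
    (hg : ∀ i, DifferentiableOn ℂ (g i) (Ui i))
    (hcover : ∀ a ∈ U, ∃ i, a ∈ Ui i ∧ g i a = f a)
    (U' : Set (Fin n → ℂ))
    (hU' : U' = ⋃ i ∈ {i : ℕ | Set.EqOn (g i) f (Ui i)}, Ui i) :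
    volume (U \ U') = 0 ∧ (n = 1 → (U \ U').Countable) := by
  have hdiff i : DifferentiableOn ℂ (g i - f) (Ui i) := (hg i).sub (hf.mono (hUi_sub i))
  have hsub : U \ U' ⊆
      ⋃ i ∈ {i | ¬EqOn (g i - f) 0 (Ui i)}, {x | (g i - f) x = 0} ∩ Ui i := by
    rintro a ⟨haU, haU'⟩
    obtain ⟨i, hai, hgi⟩ := hcover a haU
    refine mem_biUnion (fun heq => haU' ?_) ⟨sub_eq_zero.2 hgi, hai⟩
    rw [hU']
    exact mem_biUnion (fun x hx => sub_eq_zero.1 (heq hx)) hai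
  constructor
  · refine measure_mono_null hsub ((measure_biUnion_null_iff (to_countable _)).2 fun i hi => ?_)
    exact (hdiff i).addHaar_setOf_eq_zero_inter volume (hUi_open i)
      (hUi_conn i).isPreconnected hi
  · rintro rfl
    refine ((to_countable _).biUnion fun i hi => ?_).mono hsub
    exact (hdiff i).countable_setOf_eq_zero_inter (by simp) (hUi_open i)
      (hUi_conn i).isPreconnected hi

/-- if `f` is holomorphic on a connected open `U ⊆ ℂⁿ` and a countable family of
holomorphic functions `g i : U i → ℂ` (each `U i` connected, open, `⊆ U`) pointwise covers `f`,
then letting `U'` be the union of those `U i` on which `g i` agrees with `f` identically,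
`U ∖ U'` has Lebesgue measure zero; moreover if `n = 1` then `U ∖ U'` is countable. -/
theorem measure_zero_of_pointwise_definable
    {n : ℕ} (U : Set (Fin n → ℂ)) (hUopen : IsOpen U) (hUconn : IsConnected U)
    (f : (Fin n → ℂ) → ℂ) (hf : DifferentiableOn ℂ f U)
    (Ui : ℕ → Set (Fin n → ℂ)) (g : ℕ → ((Fin n → ℂ) → ℂ))
    (hUi_open : ∀ i, IsOpen (Ui i)) (hUi_conn : ∀ i, IsConnected (Ui i))
    (hUi_sub : ∀ i, Ui i ⊆ U)
    (hg : ∀ i, DifferentiableOn ℂ (g i) (Ui i))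
    (hcover : ∀ a ∈ U, ∃ i, a ∈ Ui i ∧ g i a = f a)
    (U' : Set (Fin n → ℂ))
    (hU' : U' = ⋃ i ∈ {i : ℕ | Set.EqOn (g i) f (Ui i)}, Ui i) :
    volume (U \ U') = 0 ∧ (n = 1 → (U \ U').Countable) :=
  measure_zero_of_pointwise_definable_general U f hf Ui g hUi_open hUi_conn hUi_sub hg hcover U' hU'
end

section
/- Let C ⊆ A ⊆ ℂ and C ⊆ B ⊆ ℂ be field extensions of a field C with tr.deg(A/C) and tr.deg(B/C) finite. Writing AB for the compositum, transcendence degree is submodular: tr.deg(AB/C) + tr.deg((A ∩ B)/C) ≤ tr.deg(A/C) + tr.deg(B/C). -/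
/-!
Algebraic independence over `C` makes `ℂ` a matroid (`AlgebraicIndependent.matroid`) in which
the closure of `s` consists of the elements algebraic over `C(s)`. A finite `td(E/C)` is the
matroid rank of the set `E`; the compositum `A ⊔ B` lies in the closure of `A ∪ B`, so the
inequality is submodularity of the matroid rank applied to `A` and `B`.
-/

def AlgebraicOver (C : Subfield ℂ) (x : ℂ) : Prop :=
  ∃ p : Polynomial C, p ≠ 0 ∧ Polynomial.eval₂ C.subtype x p = 0

def TdLE (C E : Subfield ℂ) (m : ℕ) : Prop :=
  ∃ s : Finset ℂ, s.card = m ∧ (s : Set ℂ) ⊆ (E : Set ℂ) ∧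
    ∀ x ∈ E, AlgebraicOver (Subfield.closure ((C : Set ℂ) ∪ (s : Set ℂ))) x

/-- When no `TdLE C E m` holds this is `sInf ∅ = 0`. -/
noncomputable def td (C E : Subfield ℂ) : ℕ := sInf {m | TdLE C E m}

namespace Matroid

variable {α : Type*} (M : Matroid α)

def spanningCards (X : Set α) : Set ℕ :=
  {m | ∃ s : Finset α, s.card = m ∧ (s : Set α) ⊆ X ∧ X ⊆ M.closure s}

variable {M}

lemma eRk_le_card_of_subset_closure {X : Set α} {s : Finset α} (hX : X ⊆ M.closure s) :
    M.eRk X ≤ s.card :=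
  calc M.eRk X ≤ M.eRk (M.closure s) := M.eRk_mono hX
    _ = M.eRk s := M.eRk_closure_eq s
    _ ≤ (s : Set α).encard := M.eRk_le_encard s
    _ = s.card := Set.encard_coe_eq_coe_finsetCard s

lemma IsRkFinite.exists_finset_spanning {X : Set α} (hX : M.IsRkFinite X) (hXE : X ⊆ M.E) :
    ∃ s : Finset α, (s.card : ℕ∞) = M.eRk X ∧ (s : Set α) ⊆ X ∧ X ⊆ M.closure s := by
  obtain ⟨I, hI⟩ := M.exists_isBasis X hXE
  have hIfin := hX.finite_of_isBasis hI
  refine ⟨hIfin.toFinset, ?_, by simpa using hI.subset, by simpa using hI.subset_closure⟩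
  rw [← Set.encard_coe_eq_coe_finsetCard, Set.Finite.coe_toFinset, hI.encard_eq_eRk]

lemma IsRkFinite.sInf_spanningCards {X : Set α} (hX : M.IsRkFinite X) (hXE : X ⊆ M.E) :
    ((sInf (M.spanningCards X) : ℕ) : ℕ∞) = M.eRk X := by
  obtain ⟨s, hs, hsX, hXs⟩ := hX.exists_finset_spanning hXE
  have hmem : s.card ∈ M.spanningCards X := ⟨s, rfl, hsX, hXs⟩
  obtain ⟨t, ht, -, hXt⟩ := Nat.sInf_mem ⟨_, hmem⟩
  refine le_antisymm ?_ ?_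
  · rw [← hs]
    exact_mod_cast Nat.sInf_le hmem
  · rw [← ht]
    exact eRk_le_card_of_subset_closure hXt

end Matroid

open AlgebraicIndependent

section

variable (C : Subfield ℂ)

open IntermediateField.algebraAdjoinAdjoin in
theorem algebraicOver_closure_union_iff (s : Set ℂ) (x : ℂ) :
    AlgebraicOver (Subfield.closure ((C : Set ℂ) ∪ s)) x ↔ x ∈ (matroid C ℂ).closure s := by
  have hF : Subfield.closure ((C : Set ℂ) ∪ s) = (IntermediateField.adjoin C s).toSubfield := by
    rw [IntermediateField.adjoin_toSubfield]
    congr 2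
    exact Subtype.range_coe.symm
  rw [hF, matroid_closure_eq, SetLike.mem_coe,
    Subalgebra.mem_algebraicClosure]
  exact (IsFractionRing.isAlgebraic_iff (Algebra.adjoin C s) (IntermediateField.adjoin C s) ℂ).symm

theorem coe_sup_subset_closure_union (A B : Subfield ℂ) :
    ((A ⊔ B : Subfield ℂ) : Set ℂ) ⊆ (matroid C ℂ).closure (A ∪ B) := by
  intro x hx
  rw [← algebraicOver_closure_union_iff]
  have hle : A ⊔ B ≤ Subfield.closure ((C : Set ℂ) ∪ (A ∪ B)) :=
    sup_le (fun _ ha ↦ Subfield.subset_closure (.inr (.inl ha)))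
      (fun _ hb ↦ Subfield.subset_closure (.inr (.inr hb)))
  exact isAlgebraic_algebraMap (⟨x, hle hx⟩ : Subfield.closure ((C : Set ℂ) ∪ (A ∪ B)))

theorem tdLE_iff {E : Subfield ℂ} {m : ℕ} :
    TdLE C E m ↔ m ∈ (matroid C ℂ).spanningCards E := by
  simp only [TdLE, Matroid.spanningCards, algebraicOver_closure_union_iff]
  rfl

theorem isRkFinite_of_tdLE {E : Subfield ℂ} {m : ℕ} (h : TdLE C E m) :
    (matroid C ℂ).IsRkFinite E := by
  obtain ⟨s, -, -, hEs⟩ := (tdLE_iff C).1 h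
  exact ((matroid C ℂ).isRkFinite_of_finite s.finite_toSet).closure.subset hEs

theorem td_eq_eRk {E : Subfield ℂ} (hE : (matroid C ℂ).IsRkFinite E) :
    (td C E : ℕ∞) = (matroid C ℂ).eRk E := by
  have : {m | TdLE C E m} = (matroid C ℂ).spanningCards E := Set.ext fun _ ↦ tdLE_iff C
  rw [td, this, hE.sInf_spanningCards (Set.subset_univ _)]

end

theorem td_submodular_general (C A B : Subfield ℂ)
    (hfinA : ∃ m, TdLE C A m) (hfinB : ∃ m, TdLE C B m) :
    td C (A ⊔ B) + td C (A ⊓ B) ≤ td C A + td C B := by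
  set M := matroid C ℂ
  obtain ⟨_, hA⟩ := hfinA
  obtain ⟨_, hB⟩ := hfinB
  replace hA : M.IsRkFinite A := isRkFinite_of_tdLE C hA
  replace hB : M.IsRkFinite B := isRkFinite_of_tdLE C hB
  have hsup := coe_sup_subset_closure_union C A B
  have hsupFin : M.IsRkFinite (A ⊔ B : Subfield ℂ) := (hA.union hB).closure.subset hsup
  have hinfFin : M.IsRkFinite (A ⊓ B : Subfield ℂ) := hA.subset Set.inter_subset_left
  suffices (td C (A ⊔ B) + td C (A ⊓ B) : ℕ∞) ≤ td C A + td C B by exact_mod_cast this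
  rw [td_eq_eRk C hsupFin, td_eq_eRk C hinfFin, td_eq_eRk C hA, td_eq_eRk C hB]
  calc M.eRk (A ⊔ B : Subfield ℂ) + M.eRk (A ∩ B)
      _ ≤ M.eRk (A ∪ B) + M.eRk (A ∩ B) :=
        add_le_add_left ((M.eRk_mono hsup).trans (M.eRk_closure_eq _).le) _
      _ ≤ M.eRk A + M.eRk B := by
        rw [add_comm]
        exact M.eRk_inter_add_eRk_union_le A B

/-- transcendence degree is submodular: for subfields `C ⊆ A, B ⊆ ℂ` with
`td(A/C)`, `td(B/C)` finite, `td(AB/C) + td((A ∩ B)/C) ≤ td(A/C) + td(B/C)`, where `AB` is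
the compositum `A ⊔ B`. -/
theorem td_submodular (C A B : Subfield ℂ) (hCA : C ≤ A) (hCB : C ≤ B)
    (hfinA : ∃ m, TdLE C A m) (hfinB : ∃ m, TdLE C B m) :
    td C (A ⊔ B) + td C (A ⊓ B) ≤ td C A + td C B :=
  td_submodular_general C A B hfinA hfinB
end

section
/- Let (X, cl) be a pregeometry, let C ⊆ X be closed, and suppose b₁, …, bₙ ∈ X. If there exist 'derivations' ∂₁, …, ∂ₙ in a set D of functions X → k (k a field) characterizing cl over C in the sense that x ∈ cl(C ∪ S) iff ∂x = 0 for all ∂ ∈ D vanishing on S, then b₁, …, bₙ are cl-independent over C if and only if there exist ∂₁, …, ∂ₙ ∈ D (each vanishing on C) with ∂ᵢbⱼ = δᵢⱼ (Kronecker delta). -/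
/-! Both sides say that for each `i` some derivation vanishes on `C` and on the `bⱼ` with
`j ≠ i` but not at `bᵢ`: on the left this is the characterization of `cl (C ∪ {bⱼ | j ≠ i})`
by `D`, on the right the `i`-th row of the Kronecker system, after rescaling by `(∂ bᵢ)⁻¹`. -/

/-- A pregeometry (finitary matroid) on a set `X`. -/
structure Pregeometry (X : Type*) where
  cl : Set X → Set X
  subset_cl : ∀ S, S ⊆ cl S
  mono : ∀ S T, S ⊆ T → cl S ⊆ cl T
  idem : ∀ S, cl (cl S) = cl S
  exchange : ∀ (S : Set X) (a b : X), a ∈ cl (S ∪ {b}) → a ∉ cl S → b ∈ cl (S ∪ {a})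
  finChar : ∀ (S : Set X) (a : X), a ∈ cl S → ∃ F : Finset X, ↑F ⊆ S ∧ a ∈ cl ↑F

section DualSystem

variable {X ι k : Type*} [Field k] (D : Submodule k (X → k))

theorem Submodule.exists_mem_eq_zero_on_apply_eq_one {T : Set X} {p : X} {e : X → k}
    (he : e ∈ D) (hT : ∀ x ∈ T, e x = 0) (hp : e p ≠ 0) :
    ∃ d ∈ D, (∀ x ∈ T, d x = 0) ∧ d p = 1 :=
  ⟨(e p)⁻¹ • e, D.smul_mem _ he, fun x hx => by simp [hT x hx], inv_mul_cancel₀ hp⟩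

theorem Submodule.exists_kronecker_dual_iff [DecidableEq ι] (C : Set X) (b : ι → X) :
    (∃ d : ι → (X → k), (∀ i, d i ∈ D) ∧ (∀ i, ∀ x ∈ C, d i x = 0) ∧
        ∀ i j, d i (b j) = if i = j then 1 else 0) ↔
      ∀ i, ∃ e ∈ D, (∀ x ∈ C ∪ {x | ∃ j, j ≠ i ∧ x = b j}, e x = 0) ∧ e (b i) ≠ 0 := by
  constructor
  · rintro ⟨d, hdD, hdC, hδ⟩ i
    refine ⟨d i, hdD i, ?_, by simp [hδ]⟩
    rintro x (hx | ⟨j, hji, rfl⟩)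
    · exact hdC i x hx
    · simpa [Ne.symm hji] using hδ i j
  · intro hsep
    have hnorm : ∀ i, ∃ d ∈ D,
        (∀ x ∈ C ∪ {x | ∃ j, j ≠ i ∧ x = b j}, d x = 0) ∧ d (b i) = 1 := fun i => by
      obtain ⟨e, he, hT, hp⟩ := hsep i
      exact D.exists_mem_eq_zero_on_apply_eq_one he hT hp
    choose d hdD hdT hdi using hnorm
    refine ⟨d, hdD, fun i x hx => hdT i x (Or.inl hx), fun i j => ?_⟩
    split_ifs with hij
    · exact hij ▸ hdi i
    · exact hdT i (b j) (Or.inr ⟨j, Ne.symm hij, rfl⟩)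

end DualSystem

theorem independence_iff_dual_derivations_general
    {X : Type*} (P : Pregeometry X) {k : Type*} [Field k]
    (D : Submodule k (X → k)) (C : Set X)
    (hchar : ∀ S : Set X, S.Finite → ∀ b : X,
      (b ∈ P.cl (C ∪ S) ↔ ∀ d ∈ D, (∀ x ∈ C ∪ S, d x = 0) → d b = 0))
    (n : ℕ) (b : Fin n → X) :
    (∀ i : Fin n, b i ∉ P.cl (C ∪ {x | ∃ j : Fin n, j ≠ i ∧ x = b j})) ↔
      ∃ d : Fin n → (X → k), (∀ i, d i ∈ D) ∧ (∀ i, ∀ x ∈ C, d i x = 0) ∧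
        ∀ i j, d i (b j) = if i = j then 1 else 0 := by
  rw [D.exists_kronecker_dual_iff C b]
  refine forall_congr' fun i => ?_
  have hfin : {x | ∃ j : Fin n, j ≠ i ∧ x = b j}.Finite :=
    (Set.finite_range b).subset fun x ⟨j, _, hx⟩ => ⟨j, hx.symm⟩
  rw [hchar _ hfin]
  push Not
  rfl

/-- in a pregeometry `(X, cl)` with `C` closed, if a `k`-vector space `D` of
functions `X → k` ("derivations") characterizes `cl` over `C` (i.e. `b ∈ cl (C ∪ S)` iff
every `d ∈ D` vanishing on `C ∪ S` vanishes at `b`), then `b₁, …, bₙ` are `cl`-independent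
over `C` iff there exist `d₁, …, dₙ ∈ D`, each vanishing on `C`, with `dᵢ bⱼ = δᵢⱼ`. -/
theorem independence_iff_dual_derivations
    {X : Type*} (P : Pregeometry X) {k : Type*} [Field k]
    (D : Submodule k (X → k)) (C : Set X) (hC : P.cl C = C)
    (hchar : ∀ S : Set X, S.Finite → ∀ b : X,
      (b ∈ P.cl (C ∪ S) ↔ ∀ d ∈ D, (∀ x ∈ C ∪ S, d x = 0) → d b = 0))
    (n : ℕ) (b : Fin n → X) :
    (∀ i : Fin n, b i ∉ P.cl (C ∪ {x | ∃ j : Fin n, j ≠ i ∧ x = b j})) ↔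
      ∃ d : Fin n → (X → k), (∀ i, d i ∈ D) ∧ (∀ i, ∀ x ∈ C, d i x = 0) ∧
        ∀ i j, d i (b j) = if i = j then 1 else 0 :=
  independence_iff_dual_derivations_general P D C hchar n b
end
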